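/- arXiv:1205.1470 — 6 statements merged into one kernel-verified Lean document; each statement's English description precedes it below -/
import Mathlib

section
/- Fix R > 0, 0 < r ≤ R and R - r ≤ y ≤ R with r, y ≥ 1. Let θ_r(y) = arccos((cosh(r)cosh(y) - cosh(R))/(sinh(r)sinh(y))). Then cos(θ_r(y)) = 1 - 2e^{R-r-y} + E where |E| ≤ K·(e^{-2r} + e^{-2y} + e^{R-r-y}·(e^{-2r} + e^{-2y})) for some absolute constant K > 0. -/
open Real

set_option maxHeartbeats 2000000 in
theorem stmt_8 :
    ∃ K : ℝ, 0 < K ∧ ∀ R r y : ℝ, 0 < R → 0 < r → r ≤ R → R - r ≤ y → y ≤ R →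
      1 ≤ r → 1 ≤ y →
      ∃ E : ℝ,
        Real.cos (Real.arccos ((Real.cosh r * Real.cosh y - Real.cosh R) /
            (Real.sinh r * Real.sinh y))) = 1 - 2 * Real.exp (R - r - y) + E ∧
        |E| ≤ K * (Real.exp (-2 * r) + Real.exp (-2 * y) +
          Real.exp (R - r - y) * (Real.exp (-2 * r) + Real.exp (-2 * y))) := by
  refine ⟨16, by norm_num, fun R r y hR hr hrR hyl hyR hr1 hy1 => ?_⟩
  have hy : 0 < y := lt_of_lt_of_le one_pos hy1
  have hsr : 0 < Real.sinh r := Real.sinh_pos_iff.2 hr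
  have hsy : 0 < Real.sinh y := Real.sinh_pos_iff.2 hy
  have hS : 0 < Real.sinh r * Real.sinh y := mul_pos hsr hsy
  set A : ℝ := (Real.cosh r * Real.cosh y - Real.cosh R) / (Real.sinh r * Real.sinh y) with hA
  have hA1 : A ≤ 1 := by
    rw [hA, div_le_one hS]
    have h1 : Real.cosh (r - y) ≤ Real.cosh R := by
      rw [Real.cosh_le_cosh, abs_of_pos hR, abs_le]
      constructor <;> linarith
    rw [Real.cosh_sub] at h1
    linarith
  have hA2 : -1 ≤ A := by
    rw [hA, le_div_iff₀ hS]
    have h1 : Real.cosh R ≤ Real.cosh (r + y) := by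
      rw [Real.cosh_le_cosh, abs_of_pos hR, abs_of_pos (by linarith : (0:ℝ) < r + y)]
      linarith
    rw [Real.cosh_add] at h1
    linarith
  refine ⟨A - (1 - 2 * Real.exp (R - r - y)), by rw [Real.cos_arccos hA2 hA1]; ring, ?_⟩
  set X := Real.exp (-2 * r) with hX
  set Y := Real.exp (-2 * y) with hYd
  set T := Real.exp (R - r - y) with hT
  set Q := Real.exp (-2 * R) with hQ
  have hXpos : 0 < X := Real.exp_pos _
  have hYpos : 0 < Y := Real.exp_pos _
  have hTpos : 0 < T := Real.exp_pos _
  have hQpos : 0 < Q := Real.exp_pos _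
  have he2 : Real.exp (-2 : ℝ) ≤ 1/4 := by
    rw [Real.exp_neg, show (2:ℝ) = 1 + 1 by norm_num, Real.exp_add]
    rw [inv_le_comm₀ (by positivity) (by norm_num)]
    nlinarith [Real.exp_one_gt_d9]
  have hX4 : X ≤ 1/4 := le_trans (by rw [hX]; exact Real.exp_le_exp.2 (by linarith)) he2
  have hY4 : Y ≤ 1/4 := le_trans (by rw [hYd]; exact Real.exp_le_exp.2 (by linarith)) he2
  have hQX : Q ≤ X := by rw [hQ, hX]; exact Real.exp_le_exp.2 (by linarith)
  have hXne : (1:ℝ) - X ≠ 0 := by linarith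
  have hYne : (1:ℝ) - Y ≠ 0 := by linarith
  have sr : Real.sinh r = Real.exp r * (1 - X) / 2 := by
    rw [Real.sinh_eq, hX]
    rw [show Real.exp r * (1 - Real.exp (-2*r)) = Real.exp r - Real.exp r * Real.exp (-2*r) by ring,
      ← Real.exp_add]
    ring_nf
  have sy : Real.sinh y = Real.exp y * (1 - Y) / 2 := by
    rw [Real.sinh_eq, hYd]
    rw [show Real.exp y * (1 - Real.exp (-2*y)) = Real.exp y - Real.exp y * Real.exp (-2*y) by ring,
      ← Real.exp_add]
    ring_nf
  have cr : Real.cosh r = Real.exp r * (1 + X) / 2 := by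
    rw [Real.cosh_eq, hX]
    rw [show Real.exp r * (1 + Real.exp (-2*r)) = Real.exp r + Real.exp r * Real.exp (-2*r) by ring,
      ← Real.exp_add]
    ring_nf
  have cy : Real.cosh y = Real.exp y * (1 + Y) / 2 := by
    rw [Real.cosh_eq, hYd]
    rw [show Real.exp y * (1 + Real.exp (-2*y)) = Real.exp y + Real.exp y * Real.exp (-2*y) by ring,
      ← Real.exp_add]
    ring_nf
  have cR : Real.cosh R = T * Real.exp r * Real.exp y * (1 + Q) / 2 := by
    rw [Real.cosh_eq, hT, hQ]
    rw [show Real.exp (R - r - y) * Real.exp r * Real.exp y * (1 + Real.exp (-2*R))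
        = Real.exp (R - r - y) * Real.exp r * Real.exp y
          + Real.exp (R - r - y) * Real.exp r * Real.exp y * Real.exp (-2*R) by ring,
      ← Real.exp_add, ← Real.exp_add, ← Real.exp_add]
    rw [show R - r - y + r + y = R by ring, show R + -2*R = -R by ring]
  have key : A - (1 - 2 * T) =
      (2*X + 2*Y - 2*T*(X + Y - X*Y + Q)) / ((1 - X) * (1 - Y)) := by
    rw [hA, sr, sy, cr, cy, cR]
    field_simp
    ring
  rw [key]
  clear_value X Y T Q
  clear hA key sr sy cr cy cR hX hYd hT hQ
  have hDpos : 0 < (1 - X) * (1 - Y) := mul_pos (by linarith) (by linarith)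
  rw [abs_div, abs_of_pos hDpos, div_le_iff₀ hDpos]
  have h0 : 0 ≤ X + Y - X*Y + Q := by nlinarith [mul_nonneg hXpos.le (by linarith : (0:ℝ) ≤ 1 - Y)]
  have h2 : X + Y - X*Y + Q ≤ 2*(X+Y) := by nlinarith [hQX, mul_nonneg hXpos.le hYpos.le]
  have ha := mul_nonneg hTpos.le h0
  have hb := mul_le_mul_of_nonneg_left h2 hTpos.le
  have hc : 0 ≤ T * (X + Y) := mul_nonneg hTpos.le (by linarith)
  have hNbound : |2*X + 2*Y - 2*T*(X + Y - X*Y + Q)| ≤ 2*(X+Y) + 4*(T*(X+Y)) := by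
    rw [abs_le]
    constructor <;> nlinarith [ha, hb, hc]
  have hD916 : (9:ℝ)/16 ≤ (1-X)*(1-Y) := by nlinarith [mul_nonneg (by linarith : (0:ℝ) ≤ 1/4 - X) (by linarith : (0:ℝ) ≤ 1/4 - Y)]
  have hTXY : 0 ≤ X + Y + T * (X + Y) := by positivity
  calc |2*X + 2*Y - 2*T*(X + Y - X*Y + Q)| ≤ 2*(X+Y) + 4*(T*(X+Y)) := hNbound
    _ ≤ 16 * (X + Y + T * (X + Y)) * (9/16) := by nlinarith [hc]
    _ ≤ 16 * (X + Y + T * (X + Y)) * ((1 - X) * (1 - Y)) := by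
        apply mul_le_mul_of_nonneg_left hD916 (by positivity)
end

section
/- There exist constants K > 0 and c₀ > 0 such that: for all R ≥ 1, all r with 0 ≤ r ≤ R and all y with R - r ≤ y ≤ R satisfying r ≥ c₀ and y ≥ c₀ and e^{R-r-y} ≤ 1/2, the angle θ_r(y) = arccos((cosh(r)cosh(y) - cosh(R))/(sinh(r)sinh(y))) satisfies |θ_r(y) - 2e^{(R-r-y)/2}| ≤ K·e^{(R-r-y)/2}·e^{R-r-y}. -/
open Real
set_option maxHeartbeats 1000000

lemma exp3 (a b c : ℝ) : Real.exp (a + (b + c)) = Real.exp a * (Real.exp b * Real.exp c) := by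
  rw [Real.exp_add, Real.exp_add]

lemma partA (R r y : ℝ) (hR : 0 ≤ R) (hr0 : 0 ≤ r) (hy0 : 0 ≤ y) (hrR : r ≤ R) (hyR : y ≤ R)
    (hε : Real.exp (R - r - y) ≤ 1 / 2) :
    |1 - (Real.cosh r * Real.cosh y - Real.cosh R) / (Real.sinh r * Real.sinh y)
      - 2 * Real.exp (R - r - y)| ≤ 24 * Real.exp (R - r - y) ^ 2 := by
  set ε := Real.exp (R - r - y) with hεdef
  set m := Real.exp (r + y) with hmdef
  set P := Real.exp (r - y) with hPdef
  set Q := Real.exp (y - r) with hQdef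
  set M := Real.exp (-(r + y)) with hMdef
  set E := Real.exp (-R) with hEdef
  have hεpos : 0 < ε := Real.exp_pos _
  have hmpos : 0 < m := Real.exp_pos _
  have hPpos : 0 < P := Real.exp_pos _
  have hQpos : 0 < Q := Real.exp_pos _
  have hMpos : 0 < M := Real.exp_pos _
  have hEpos : 0 < E := Real.exp_pos _
  -- comparisons
  have hP : P ≤ ε * (ε * m) := by
    rw [hPdef, hεdef, hmdef, ← exp3]; exact Real.exp_le_exp.2 (by linarith)
  have hQ : Q ≤ ε * (ε * m) := by
    rw [hQdef, hεdef, hmdef, ← exp3]; exact Real.exp_le_exp.2 (by linarith)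
  have hE : E ≤ ε * (ε * m) := by
    rw [hEdef, hεdef, hmdef, ← exp3]; exact Real.exp_le_exp.2 (by linarith)
  have hεP : ε * P ≤ ε * (ε * m) := by
    rw [hPdef, hεdef, hmdef, ← exp3, ← Real.exp_add]; exact Real.exp_le_exp.2 (by linarith)
  have hεQ : ε * Q ≤ ε * (ε * m) := by
    rw [hQdef, hεdef, hmdef, ← exp3, ← Real.exp_add]; exact Real.exp_le_exp.2 (by linarith)
  have hεM : ε * M ≤ ε * (ε * m) := by
    rw [hMdef, hεdef, hmdef, ← exp3, ← Real.exp_add]; exact Real.exp_le_exp.2 (by linarith)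
  set D := Real.sinh r * Real.sinh y with hDdef
  set N := Real.cosh r * Real.cosh y - Real.cosh R with hNdef
  have he := Real.exp_ne_zero r
  have he' := Real.exp_ne_zero y
  have he'' := Real.exp_ne_zero R
  have eD : 4 * D = m - P - Q + M := by
    rw [hDdef, hmdef, hPdef, hQdef, hMdef]
    simp only [Real.sinh_eq, Real.exp_sub, Real.exp_neg, Real.exp_add]
    field_simp
    ring
  have key : 4 * (D - N - 2 * ε * D) = 2 * E - 2 * P - 2 * Q + 2 * ε * P + 2 * ε * Q - 2 * ε * M := by
    rw [hDdef, hNdef, hεdef, hPdef, hQdef, hMdef, hEdef]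
    simp only [Real.sinh_eq, Real.cosh_eq, Real.exp_sub, Real.exp_neg, Real.exp_add]
    field_simp
    ring
  have hε2 : ε * ε ≤ 1 / 4 := by nlinarith
  have hD8 : m / 8 ≤ D := by nlinarith
  have hDpos : 0 < D := lt_of_lt_of_le (by positivity) hD8
  have hnum : |D - N - 2 * ε * D| ≤ 24 * ε ^ 2 * D := by
    have h1 : |D - N - 2 * ε * D| ≤ 3 * (ε * (ε * m)) := by
      rw [abs_le]; constructor <;> nlinarith
    have : 3 * (ε * (ε * m)) ≤ 24 * ε ^ 2 * D := by nlinarith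
    linarith
  have heq : 1 - N / D - 2 * ε = (D - N - 2 * ε * D) / D := by
    field_simp
  rw [heq, abs_div, abs_of_pos hDpos, div_le_iff₀ hDpos]
  exact hnum
lemma partB (ε x : ℝ) (hε0 : 0 < ε) (hε : ε ≤ 1 / 100)
    (hx : |1 - x - 2 * ε| ≤ 24 * ε ^ 2) :
    |Real.arccos x - 2 * Real.sqrt ε| ≤ 28 * Real.sqrt ε * ε := by
  set q := Real.sqrt ε with hqdef
  have hq0 : 0 < q := Real.sqrt_pos.2 hε0
  have hq2 : q ^ 2 = ε := Real.sq_sqrt hε0.le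
  have hxlo : ε - 12 * ε ^ 2 ≤ (1 - x) / 2 := by
    rcases abs_le.1 hx with ⟨h1, h2⟩; linarith
  have hxhi : (1 - x) / 2 ≤ ε + 12 * ε ^ 2 := by
    rcases abs_le.1 hx with ⟨h1, h2⟩; linarith
  have hhalfpos : 0 < (1 - x) / 2 := by nlinarith
  set s := Real.sqrt ((1 - x) / 2) with hsdef
  have hs0 : 0 < s := Real.sqrt_pos.2 hhalfpos
  have hs2 : s ^ 2 = (1 - x) / 2 := Real.sq_sqrt hhalfpos.le
  have hs2hi : s ^ 2 ≤ 1 / 50 := by nlinarith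
  have hshalf : s ≤ 1 / 2 := by nlinarith [sq_nonneg (s - 1/2)]
  have hs1 : s < 1 := by linarith
  have hxs : x = 1 - 2 * s ^ 2 := by linarith [hs2]
  -- arccos x = 2 arcsin s
  have harc : Real.arccos x = 2 * Real.arcsin s := by
    have h1 : Real.cos (2 * Real.arcsin s) = x := by
      rw [Real.cos_two_mul, Real.cos_arcsin,
        Real.sq_sqrt (by nlinarith : (0:ℝ) ≤ 1 - s ^ 2)]
      linarith
    have h2 : 0 ≤ 2 * Real.arcsin s := by
      have := Real.arcsin_nonneg.2 hs0.le; linarith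
    have h3 : 2 * Real.arcsin s ≤ π := by
      have := Real.arcsin_le_pi_div_two s; linarith
    rw [← h1, Real.arccos_cos h2 h3]
  -- lower bound on arcsin
  have hlow : s ≤ Real.arcsin s := by
    have h := Real.sin_lt (Real.arcsin_pos.2 hs0)
    rw [Real.sin_arcsin (by linarith) hs1.le] at h
    linarith
  -- upper bound on arcsin
  have hhigh : Real.arcsin s ≤ s + s ^ 3 := by
    have hθpos : 0 < Real.arcsin s := Real.arcsin_pos.2 hs0
    have hθlt : Real.arcsin s < π / 2 := Real.arcsin_lt_pi_div_two.2 hs1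
    have htan : Real.arcsin s ≤ Real.tan (Real.arcsin s) :=
      (Real.lt_tan hθpos hθlt).le
    rw [Real.tan_arcsin] at htan
    set t := Real.sqrt (1 - s ^ 2) with htdef
    have ht0 : 0 < t := Real.sqrt_pos.2 (by nlinarith)
    have ht2 : t ^ 2 = 1 - s ^ 2 := Real.sq_sqrt (by nlinarith)
    have hu2 : 1 ≤ (t * (1 + s ^ 2)) ^ 2 := by
      rw [mul_pow, ht2]; nlinarith [hs2hi, sq_nonneg s, sq_nonneg (s ^ 2), mul_nonneg (sq_nonneg s) (sq_nonneg s)]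
    have hu : 1 ≤ t * (1 + s ^ 2) := by nlinarith [mul_pos ht0 (by positivity : (0:ℝ) < 1 + s ^ 2)]
    have hdiv : s / t ≤ s + s ^ 3 := by
      rw [div_le_iff₀ ht0]
      nlinarith [mul_le_mul_of_nonneg_left hu hs0.le]
    linarith
  -- |s - q| ≤ 12 q ε
  have hs45 : 4 * q ≤ 5 * s := by nlinarith
  have hsub : s ≤ q + 12 * q * ε := by
    nlinarith [mul_pos hq0 hε0, mul_pos (mul_pos hq0 hq0) hε0]
  have hsub2 : q ≤ s + 12 * q * ε := by
    nlinarith [mul_pos hq0 hε0, mul_pos (mul_pos hq0 hq0) hε0,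
      mul_le_mul_of_nonneg_right hs45 hε0.le]
  -- s^3 bound
  have hs65 : s ≤ 6 / 5 * q := by nlinarith
  have hs3 : s ^ 3 ≤ 2 * (q * ε) := by
    have h := pow_le_pow_left₀ hs0.le hs65 3
    have : q ^ 3 = q * ε := by rw [← hq2]; ring
    nlinarith [pow_pos hq0 3]
  have hqε : 0 < q * ε := mul_pos hq0 hε0
  rw [harc]
  rw [abs_le]
  constructor <;> nlinarith

theorem stmt_9 :
    ∃ K c₀ : ℝ, 0 < K ∧ 0 < c₀ ∧
      ∀ R r y : ℝ, 1 ≤ R → 0 ≤ r → r ≤ R → R - r ≤ y → y ≤ R →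
        c₀ ≤ r → c₀ ≤ y → Real.exp (R - r - y) ≤ 1 / 2 →
        |Real.arccos ((Real.cosh r * Real.cosh y - Real.cosh R) /
            (Real.sinh r * Real.sinh y)) - 2 * Real.exp ((R - r - y) / 2)| ≤
          K * Real.exp ((R - r - y) / 2) * Real.exp (R - r - y) := by
  refine ⟨6000, 1, by norm_num, by norm_num, ?_⟩
  intro R r y hR hr0 hrR hRry hyR hc0r hc0y hε
  set ε := Real.exp (R - r - y) with hεdef
  set q := Real.exp ((R - r - y) / 2) with hqdef
  have hεpos : 0 < ε := Real.exp_pos _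
  have hqpos : 0 < q := Real.exp_pos _
  have hsq : Real.sqrt ε = q := by
    have h : ε = q * q := by
      rw [hεdef, hqdef, ← Real.exp_add]; ring_nf
    rw [h, Real.sqrt_mul_self hqpos.le]
  have hq2 : q ^ 2 = ε := by
    rw [← hsq, Real.sq_sqrt hεpos.le]
  set x := (Real.cosh r * Real.cosh y - Real.cosh R) / (Real.sinh r * Real.sinh y) with hxdef
  by_cases hsmall : ε ≤ 1 / 100
  · have hA := partA R r y (by linarith) hr0 (by linarith) hrR hyR hε
    have hB := partB ε x hεpos hsmall hA
    rw [hsq] at hB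
    nlinarith [mul_pos hqpos hεpos]
  · push_neg at hsmall
    have harc0 : 0 ≤ Real.arccos x := Real.arccos_nonneg x
    have harcpi : Real.arccos x ≤ π := Real.arccos_le_pi x
    have hpi : π ≤ 4 := Real.pi_le_four
    have hq1 : q ≤ 1 := by nlinarith
    have hq10 : 1 / 10 ≤ q := by nlinarith
    have h6 : 6 ≤ 6000 * q * ε := by nlinarith
    rw [abs_le]
    constructor <;> nlinarith
end

section
/- Let α > 1/2. There exist constants K > 0 and R₀ such that for all R ≥ R₀ and all r with 0 ≤ r ≤ R, the integral M(r) := 2∫_{R-r}^{R} 2e^{(R-r-y)/2}·(α sinh(α y))/(2π(cosh(α R) - 1)) dy satisfies |M(r) - (2α/(π(α - 1/2)))·e^{-r/2}| ≤ K·e^{-r/2}·(e^{-(α - 1/2)r} + e^{-r}). -/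
/-!
`exp ((c - y) / 2) * sinh (α * y)` has an explicit antiderivative. Over `[R - r, R]` its dominant
part, from the upper endpoint, is `exp (α * R - r / 2) / (2 * (α - 1 / 2))`; every other term is
at most a constant times `exp (α * (R - r))`. As
`exp (α * R) / (2 * (cosh (α * R) - 1)) = 1 + O(exp (-α * R))`, normalising turns the dominant
part into the main term and the rest into
`O(exp (-α * r)) = O(exp (-r / 2) * exp (-(α - 1 / 2) * r))`, using `r ≤ R` throughout.
-/

open Real

theorem exp_div_four_le_cosh_sub_one {x : ℝ} (hx : 4 ≤ exp x) : exp x / 4 ≤ cosh x - 1 := by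
  rw [cosh_eq]; nlinarith [exp_pos (-x)]

theorem abs_exp_div_two_mul_cosh_sub_one_sub_one_le {x : ℝ} (hx : 4 ≤ exp x) :
    |exp x / (2 * (cosh x - 1)) - 1| ≤ 4 * exp (-x) := by
  have hD := exp_div_four_le_cosh_sub_one hx
  have hD₀ : 0 < cosh x - 1 := by linarith [exp_pos x]
  have hinv : exp x * exp (-x) = 1 := by rw [← exp_add, add_neg_cancel, exp_zero]
  have hnum : exp x - 2 * (cosh x - 1) = 2 - exp (-x) := by rw [cosh_eq]; ring
  rw [div_sub_one (by positivity), hnum, abs_div, abs_of_pos (by positivity : 0 < 2 * (cosh x - 1)),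
    div_le_iff₀ (by positivity), abs_le]
  constructor <;> nlinarith [exp_pos (-x)]

section

variable {α β : ℝ}

theorem integral_exp_mul_sinh (hαβ : α - β ≠ 0) (hαβ' : α + β ≠ 0) (c a b : ℝ) :
    ∫ y in a..b, exp (β * (c - y)) * sinh (α * y) =
      (exp (β * (c - b) + α * b) - exp (β * (c - a) + α * a)) / (2 * (α - β)) +
        (exp (β * (c - b) - α * b) - exp (β * (c - a) - α * a)) / (2 * (α + β)) := by
  have hF : ∀ y, HasDerivAt
      (fun y => exp (β * (c - y) + α * y) / (2 * (α - β)) +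
        exp (β * (c - y) - α * y) / (2 * (α + β)))
      (exp (β * (c - y)) * sinh (α * y)) y := by
    intro y
    have h₁ : HasDerivAt (fun y => β * (c - y) + α * y) (α - β) y :=
      ((((hasDerivAt_id y).const_sub c).const_mul β).add
        ((hasDerivAt_id y).const_mul α)).congr_deriv (by ring)
    have h₂ : HasDerivAt (fun y => β * (c - y) - α * y) (-(α + β)) y :=
      ((((hasDerivAt_id y).const_sub c).const_mul β).sub
        ((hasDerivAt_id y).const_mul α)).congr_deriv (by ring)
    refine ((h₁.exp.div_const _).add (h₂.exp.div_const _)).congr_deriv ?_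
    rw [sinh_eq, exp_add, exp_sub, exp_neg]
    field_simp
    ring
  rw [intervalIntegral.integral_eq_sub_of_hasDerivAt (fun y _ => hF y)
    ((by fun_prop : Continuous _).intervalIntegrable a b)]
  ring

theorem abs_integral_exp_mul_sinh_sub_le (hβα : |β| < α) {R r : ℝ} (hr : 0 ≤ r) (hrR : r ≤ R) :
    |(∫ y in (R - r)..R, exp (β * (R - r - y)) * sinh (α * y)) -
        exp (α * R - β * r) / (2 * (α - β))| ≤
      (1 / (2 * (α - β)) + 1 / (α + β)) * exp (α * (R - r)) := by
  obtain ⟨hαβ', hαβ⟩ := abs_lt.mp hβα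
  have hA : 0 < α - β := by linarith
  have hB : 0 < α + β := by linarith
  rw [integral_exp_mul_sinh hA.ne' hB.ne']
  have e₁ : β * (R - r - R) + α * R = α * R - β * r := by ring
  have e₂ : β * (R - r - (R - r)) + α * (R - r) = α * (R - r) := by ring
  have le₁ : exp (β * (R - r - R) - α * R) ≤ exp (α * (R - r)) := exp_le_exp.2 (by nlinarith)
  have le₂ : exp (β * (R - r - (R - r)) - α * (R - r)) ≤ exp (α * (R - r)) :=
    exp_le_exp.2 (by nlinarith)
  rw [e₁, e₂]
  set E := exp (α * (R - r))
  set E₁ := exp (β * (R - r - R) - α * R)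
  set E₂ := exp (β * (R - r - (R - r)) - α * (R - r))
  calc _ = |E₁ / (2 * (α + β)) - E₂ / (2 * (α + β)) - E / (2 * (α - β))| := by ring_nf
    _ ≤ E₁ / (2 * (α + β)) + E₂ / (2 * (α + β)) + E / (2 * (α - β)) := by
      have : 0 < E₁ / (2 * (α + β)) := by positivity
      have : 0 < E₂ / (2 * (α + β)) := by positivity
      have : 0 < E / (2 * (α - β)) := by positivity
      rw [abs_le]; constructor <;> linarith
    _ ≤ E / (2 * (α + β)) + E / (2 * (α + β)) + E / (2 * (α - β)) := by gcongr
    _ = _ := by field_simp; ring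

theorem abs_two_mul_div_cosh_sub_one_mul_integral_sub_le {R r : ℝ} (hβ : 0 ≤ β) (hβα : β < α)
    (hR : 4 ≤ exp (α * R)) (hr : 0 ≤ r) (hrR : r ≤ R) :
    |2 * α / (cosh (α * R) - 1) * (∫ y in (R - r)..R, exp (β * (R - r - y)) * sinh (α * y)) -
        2 * α / (α - β) * exp (-(β * r))| ≤
      8 * α * (3 / (2 * (α - β)) + 1 / (α + β)) * exp (-(α * r)) := by
  have hA : 0 < α - β := by linarith
  have hα : 0 < α := by linarith
  set J := ∫ y in (R - r)..R, exp (β * (R - r - y)) * sinh (α * y)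
  set D := cosh (α * R) - 1
  have hD := exp_div_four_le_cosh_sub_one hR
  have hD₀ : 0 < D := by linarith [exp_pos (α * R)]
  have hsplit : 2 * α / D * J - 2 * α / (α - β) * exp (-(β * r)) =
      2 * α / D * (J - exp (α * R - β * r) / (2 * (α - β))) +
        2 * α / (α - β) * exp (-(β * r)) * (exp (α * R) / (2 * D) - 1) := by
    rw [sub_eq_add_neg (α * R), exp_add]
    field_simp
    ring
  have hJ : |2 * α / D * (J - exp (α * R - β * r) / (2 * (α - β)))| ≤
      8 * α * (1 / (2 * (α - β)) + 1 / (α + β)) * exp (-(α * r)) := by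
    have hc : 2 * α / D ≤ 8 * α * exp (-(α * R)) := by
      rw [div_le_iff₀ hD₀, exp_neg]
      field_simp
      nlinarith
    rw [abs_mul, abs_of_pos (by positivity)]
    calc _ ≤ 8 * α * exp (-(α * R)) * ((1 / (2 * (α - β)) + 1 / (α + β)) * exp (α * (R - r))) :=
          mul_le_mul hc (abs_integral_exp_mul_sinh_sub_le (abs_lt.2 ⟨by linarith, hβα⟩) hr hrR)
            (abs_nonneg _) (by positivity)
      _ = _ := by rw [mul_mul_mul_comm, ← exp_add]; ring_nf
  have hN : |2 * α / (α - β) * exp (-(β * r)) * (exp (α * R) / (2 * D) - 1)| ≤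
      8 * α / (α - β) * exp (-(α * r)) := by
    have hexp : exp (-(β * r)) * exp (-(α * R)) ≤ exp (-(α * r)) := by
      rw [← exp_add]; exact exp_le_exp.2 (by nlinarith)
    rw [abs_mul, abs_of_pos (by positivity)]
    calc _ ≤ 2 * α / (α - β) * exp (-(β * r)) * (4 * exp (-(α * R))) :=
          mul_le_mul_of_nonneg_left (abs_exp_div_two_mul_cosh_sub_one_sub_one_le hR) (by positivity)
      _ = 8 * α / (α - β) * (exp (-(β * r)) * exp (-(α * R))) := by ring
      _ ≤ _ := by gcongr
  calc _ ≤ _ := (hsplit ▸ abs_add_le _ _)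
    _ ≤ _ := add_le_add hJ hN
    _ = _ := by field_simp; ring

end

theorem two_mul_integral_exp_mul_sinh_div_eq (α R r : ℝ) :
    (2 * ∫ y in (R - r)..R, 2 * exp ((R - r - y) / 2) * (α * sinh (α * y)) /
        (2 * π * (cosh (α * R) - 1))) =
      2 * α / (cosh (α * R) - 1) *
        (∫ y in (R - r)..R, exp (1 / 2 * (R - r - y)) * sinh (α * y)) / π := by
  generalize cosh (α * R) - 1 = D
  have h : ∀ y, 2 * exp ((R - r - y) / 2) * (α * sinh (α * y)) / (2 * π * D) =
      α / (π * D) * (exp (1 / 2 * (R - r - y)) * sinh (α * y)) := fun y => by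
    rw [div_eq_inv_mul _ 2, inv_eq_one_div]; ring
  simp_rw [h, intervalIntegral.integral_const_mul]
  ring

theorem stmt_11 (α : ℝ) (hα : 1 / 2 < α) :
    ∃ K R₀ : ℝ, 0 < K ∧
      ∀ R r : ℝ, R₀ ≤ R → 0 ≤ r → r ≤ R →
        |(2 * ∫ y in (R - r)..R,
            2 * Real.exp ((R - r - y) / 2) * (α * Real.sinh (α * y)) /
              (2 * π * (Real.cosh (α * R) - 1))) -
          (2 * α / (π * (α - 1 / 2))) * Real.exp (-r / 2)| ≤
        K * Real.exp (-r / 2) * (Real.exp (-(α - 1 / 2) * r) + Real.exp (-r)) := by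
  have hα₀ : 0 < α := by linarith
  have hA : 0 < α - 1 / 2 := by linarith
  set K := 8 * α * (3 / (2 * (α - 1 / 2)) + 1 / (α + 1 / 2))
  have hK : 0 < K := by positivity
  refine ⟨K / π, log 4 / α, div_pos hK pi_pos, fun R r hR hr hrR => ?_⟩
  have hR₄ : 4 ≤ exp (α * R) := by
    rw [div_le_iff₀ hα₀, mul_comm] at hR
    calc (4 : ℝ) = exp (log 4) := (exp_log (by norm_num)).symm
      _ ≤ _ := exp_le_exp.2 hR
  have hmain : 2 * α / (π * (α - 1 / 2)) * exp (-r / 2) =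
      2 * α / (α - 1 / 2) * exp (-(1 / 2 * r)) / π := by
    rw [show -r / 2 = -(1 / 2 * r) by ring]
    field_simp
  rw [two_mul_integral_exp_mul_sinh_div_eq, hmain, ← sub_div, abs_div, abs_of_pos pi_pos,
    div_le_iff₀ pi_pos]
  calc _ ≤ K * exp (-(α * r)) :=
        abs_two_mul_div_cosh_sub_one_mul_integral_sub_le (by norm_num) hα hR₄ hr hrR
    _ = K * (exp (-r / 2) * exp (-(α - 1 / 2) * r)) := by rw [← exp_add]; ring_nf
    _ ≤ K * exp (-r / 2) * (exp (-(α - 1 / 2) * r) + exp (-r)) := by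
      rw [mul_assoc K]; gcongr; linarith [exp_pos (-r)]
    _ = K / π * exp (-r / 2) * (exp (-(α - 1 / 2) * r) + exp (-r)) * π := by field_simp
end

section
/- Let α > 1/2 and R > 0. For fixed y with 0 ≤ y ≤ R, the function r ↦ (cosh(r)·cosh(y) - cosh(R))/(sinh(r)·sinh(y)) is nondecreasing in r on (0, R]; consequently θ_r(y) = arccos of that quantity (truncated to [-1,1]) is nonincreasing in r. -/
theorem stmt_12 (α R y : ℝ) (hα : 1 / 2 < α) (hR : 0 < R) (hy0 : 0 ≤ y) (hyR : y ≤ R) :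
    MonotoneOn (fun r : ℝ =>
        (Real.cosh r * Real.cosh y - Real.cosh R) / (Real.sinh r * Real.sinh y))
      (Set.Ioc 0 R) ∧
    AntitoneOn (fun r : ℝ =>
        Real.arccos
          ((Real.cosh r * Real.cosh y - Real.cosh R) / (Real.sinh r * Real.sinh y)))
      (Set.Ioc 0 R) := by
  have hmono : MonotoneOn (fun r : ℝ =>
      (Real.cosh r * Real.cosh y - Real.cosh R) / (Real.sinh r * Real.sinh y))
      (Set.Ioc 0 R) := by
    intro a ha b hb hab
    rcases eq_or_lt_of_le hy0 with hy | hy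
    · simp [← hy]
    have hsy : 0 < Real.sinh y := Real.sinh_pos_iff.2 hy
    have hsa : 0 < Real.sinh a := Real.sinh_pos_iff.2 ha.1
    have hsb : 0 < Real.sinh b := Real.sinh_pos_iff.2 (lt_of_lt_of_le ha.1 hab)
    simp only
    rw [div_le_div_iff₀ (by positivity) (by positivity)]
    have key : Real.cosh y * (Real.sinh b * Real.cosh a - Real.cosh b * Real.sinh a)
        ≤ Real.cosh R * (Real.sinh b - Real.sinh a) := by
      set m := (a + b) / 2 with hm
      set d := (b - a) / 2 with hd
      have hbm : b = m + d := by rw [hm, hd]; ring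
      have ham : a = m - d := by rw [hm, hd]; ring
      have h1 : Real.sinh b * Real.cosh a - Real.cosh b * Real.sinh a
          = Real.sinh (b - a) := (Real.sinh_sub b a).symm
      have h2 : Real.sinh (b - a) = 2 * Real.sinh d * Real.cosh d := by
        have : b - a = d + d := by rw [hd]; ring
        rw [this, Real.sinh_add]; ring
      have h3 : Real.sinh b - Real.sinh a = 2 * Real.cosh m * Real.sinh d := by
        rw [hbm, ham, Real.sinh_add, Real.sinh_sub]; ring
      rw [h1, h2, h3]
      have hd0 : 0 ≤ d := by rw [hd]; linarith
      have hdm : d ≤ m := by rw [hd, hm]; linarith [ha.1]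
      have hcym : Real.cosh y ≤ Real.cosh R := by
        rw [Real.cosh_le_cosh, abs_of_nonneg hy0, abs_of_nonneg (le_trans hy0 hyR)]
        exact hyR
      have hcdm : Real.cosh d ≤ Real.cosh m := by
        rw [Real.cosh_le_cosh, abs_of_nonneg hd0, abs_of_nonneg (le_trans hd0 hdm)]
        exact hdm
      have hsd : 0 ≤ Real.sinh d := Real.sinh_nonneg_iff.2 hd0
      have h4 : Real.cosh y * Real.cosh d ≤ Real.cosh R * Real.cosh m :=
        mul_le_mul hcym hcdm ((Real.cosh_pos _).le) (le_trans ((Real.cosh_pos _).le) hcym)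
      nlinarith [Real.cosh_pos d, Real.cosh_pos m]
    nlinarith [hsy.le, key, mul_le_mul_of_nonneg_right key hsy.le]
  refine ⟨hmono, fun a ha b hb hab => ?_⟩
  simp only [Real.arccos]
  exact sub_le_sub_left (Real.monotone_arcsin (hmono ha hb hab)) _
end

section
/- Let α > 1/2, R > 0, and for 0 ≤ r ≤ R define μ(r) := 2∫₀^R θ̄_r(y)·(α sinh(α y))/(2π(cosh(α R)-1)) dy, where θ̄_r(y) = π if y ≤ R - r and θ̄_r(y) = arccos((cosh(r)cosh(y)-cosh(R))/(sinh(r)sinh(y))) otherwise. Then μ is nonincreasing in r: for 0 ≤ r₀ ≤ r ≤ R, μ(r₀) ≥ μ(r). -/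
open Real

lemma arccos_antitone' : Antitone Real.arccos := fun x y h => by
  simp only [Real.arccos]
  linarith [Real.monotone_arcsin h]

lemma theta_mono (R r₀ r : ℝ) (hR : 0 < R) (h0 : 0 ≤ r₀) (h1 : r₀ ≤ r) (h2 : r ≤ R)
    {y : ℝ} (hy : y ∈ Set.Icc (0:ℝ) R) :
    (if y ≤ R - r then π
      else Real.arccos ((Real.cosh r * Real.cosh y - Real.cosh R) /
        (Real.sinh r * Real.sinh y))) ≤
    (if y ≤ R - r₀ then π
      else Real.arccos ((Real.cosh r₀ * Real.cosh y - Real.cosh R) /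
        (Real.sinh r₀ * Real.sinh y))) := by
  obtain ⟨hy0, hyR⟩ := hy
  by_cases hA : y ≤ R - r
  · rw [if_pos hA, if_pos (by linarith)]
  · rw [if_neg hA]
    by_cases hB : y ≤ R - r₀
    · rw [if_pos hB]; exact Real.arccos_le_pi _
    · rw [if_neg hB]
      push_neg at hA hB
      -- here R - r₀ < y ≤ R, so 0 < r₀, 0 < y
      have hr₀ : 0 < r₀ := by
        rcases lt_or_ge 0 r₀ with h | h
        · exact h
        · exfalso; have : r₀ = 0 := le_antisymm h h0
          rw [this] at hB; linarith
      have hy0' : 0 < y := by linarith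
      have hsr₀ : 0 < Real.sinh r₀ := Real.sinh_pos_iff.mpr hr₀
      have hsr : 0 < Real.sinh r := Real.sinh_pos_iff.mpr (lt_of_lt_of_le hr₀ h1)
      have hsy : 0 < Real.sinh y := Real.sinh_pos_iff.mpr hy0'
      apply arccos_antitone'
      rw [div_le_div_iff₀ (by positivity) (by positivity)]
      have hcy : Real.cosh y ≤ Real.cosh R := by
        rw [Real.cosh_le_cosh, abs_of_nonneg hy0, abs_of_nonneg (by linarith : (0:ℝ) ≤ R)]; linarith
      have hsub : Real.sinh (r - r₀) = Real.sinh r * Real.cosh r₀ - Real.cosh r * Real.sinh r₀ :=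
        Real.sinh_sub r r₀
      have hsubpos : 0 ≤ Real.sinh (r - r₀) := Real.sinh_nonneg_iff.mpr (by linarith)
      have hadd : Real.sinh r = Real.sinh (r - r₀) * Real.cosh r₀ + Real.cosh (r - r₀) * Real.sinh r₀ := by
        rw [← Real.sinh_add]; ring_nf
      have hc1 : 1 ≤ Real.cosh r₀ := Real.one_le_cosh r₀
      have hc2 : 1 ≤ Real.cosh (r - r₀) := Real.one_le_cosh _
      have hkey : Real.sinh (r - r₀) + Real.sinh r₀ ≤ Real.sinh r := by
        nlinarith
      have hcR0 : (0:ℝ) ≤ Real.cosh R := (Real.cosh_pos R).le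
      have e1 : Real.cosh y * Real.sinh (r - r₀) ≤ Real.cosh R * Real.sinh (r - r₀) :=
        mul_le_mul_of_nonneg_right hcy hsubpos
      have e2 : Real.cosh R * (Real.sinh (r - r₀) + Real.sinh r₀) ≤ Real.cosh R * Real.sinh r :=
        mul_le_mul_of_nonneg_left hkey hcR0
      rw [hsub] at e1 e2
      have hAB : (Real.cosh r₀ * Real.cosh y - Real.cosh R) * Real.sinh r ≤
          (Real.cosh r * Real.cosh y - Real.cosh R) * Real.sinh r₀ := by nlinarith [e1, e2]
      nlinarith [mul_le_mul_of_nonneg_right hAB hsy.le]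
  
theorem stmt_13 (α R : ℝ) (hα : 1 / 2 < α) (hR : 0 < R) (r₀ r : ℝ)
    (h0 : 0 ≤ r₀) (h1 : r₀ ≤ r) (h2 : r ≤ R) :
    (2 * ∫ y in (0:ℝ)..R,
        (if y ≤ R - r then π
          else Real.arccos ((Real.cosh r * Real.cosh y - Real.cosh R) /
            (Real.sinh r * Real.sinh y))) *
          (α * Real.sinh (α * y)) / (2 * π * (Real.cosh (α * R) - 1))) ≤
    (2 * ∫ y in (0:ℝ)..R,
        (if y ≤ R - r₀ then π
          else Real.arccos ((Real.cosh r₀ * Real.cosh y - Real.cosh R) /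
            (Real.sinh r₀ * Real.sinh y))) *
          (α * Real.sinh (α * y)) / (2 * π * (Real.cosh (α * R) - 1))) := by
  have hα0 : 0 < α := by linarith
  have hD : 0 < 2 * π * (Real.cosh (α * R) - 1) := by
    have h1' : 1 < Real.cosh (α * R) := Real.one_lt_cosh.mpr (by positivity)
    have := Real.pi_pos
    nlinarith
  -- integrability
  have hint : ∀ r' : ℝ, IntervalIntegrable (fun y =>
      (if y ≤ R - r' then π
        else Real.arccos ((Real.cosh r' * Real.cosh y - Real.cosh R) /
          (Real.sinh r' * Real.sinh y))) *
        (α * Real.sinh (α * y)) / (2 * π * (Real.cosh (α * R) - 1)))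
      MeasureTheory.volume 0 R := by
    intro r'
    rw [intervalIntegrable_iff_integrableOn_Ioc_of_le hR.le]
    apply MeasureTheory.Measure.integrableOn_of_bounded
      (M := π * (α * Real.sinh (α * R)) / (2 * π * (Real.cosh (α * R) - 1)))
    · exact (measure_Ioc_lt_top).ne
    · apply Measurable.aestronglyMeasurable
      apply Measurable.div _ measurable_const
      apply Measurable.mul
      · exact Measurable.ite (measurableSet_le measurable_id measurable_const)
          measurable_const
          (Real.continuous_arccos.measurable.comp (by fun_prop))
      · fun_prop
    · filter_upwards [MeasureTheory.ae_restrict_mem measurableSet_Ioc] with y hy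
      obtain ⟨hy0, hyR⟩ := hy
      have hθ0 : 0 ≤ (if y ≤ R - r' then π
          else Real.arccos ((Real.cosh r' * Real.cosh y - Real.cosh R) /
            (Real.sinh r' * Real.sinh y))) := by
        split
        · exact Real.pi_pos.le
        · exact Real.arccos_nonneg _
      have hθπ : (if y ≤ R - r' then π
          else Real.arccos ((Real.cosh r' * Real.cosh y - Real.cosh R) /
            (Real.sinh r' * Real.sinh y))) ≤ π := by
        split
        · exact le_refl _
        · exact Real.arccos_le_pi _
      have hs0 : 0 ≤ Real.sinh (α * y) := Real.sinh_nonneg_iff.mpr (by positivity)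
      have hsR : Real.sinh (α * y) ≤ Real.sinh (α * R) :=
        Real.sinh_le_sinh.mpr (by nlinarith)
      rw [Real.norm_eq_abs, abs_of_nonneg (by positivity)]
      apply div_le_div_of_nonneg_right _ hD.le |>.trans_eq rfl
      · nlinarith [mul_le_mul hθπ hsR hs0 Real.pi_pos.le]
  have key : ∀ y ∈ Set.Icc (0:ℝ) R,
      (if y ≤ R - r then π
        else Real.arccos ((Real.cosh r * Real.cosh y - Real.cosh R) /
          (Real.sinh r * Real.sinh y))) *
        (α * Real.sinh (α * y)) / (2 * π * (Real.cosh (α * R) - 1)) ≤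
      (if y ≤ R - r₀ then π
        else Real.arccos ((Real.cosh r₀ * Real.cosh y - Real.cosh R) /
          (Real.sinh r₀ * Real.sinh y))) *
        (α * Real.sinh (α * y)) / (2 * π * (Real.cosh (α * R) - 1)) := by
    intro y hy
    have hθ := theta_mono R r₀ r hR h0 h1 h2 hy
    have hs0 : 0 ≤ α * Real.sinh (α * y) := by
      have : 0 ≤ Real.sinh (α * y) := Real.sinh_nonneg_iff.mpr (mul_nonneg hα0.le hy.1)
      positivity
    apply div_le_div_of_nonneg_right _ hD.le |>.trans_eq rfl
    exact mul_le_mul_of_nonneg_right hθ hs0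
  have := intervalIntegral.integral_mono_on hR.le (hint r) (hint r₀) key
  linarith
end

section
/- Let α > 1/2 and C ∈ ℝ, and set R = 2 log n + C. Then n·∫₀^R e^{α(r-R)}·e^{-r/2} dr → e^{-C/2}/(α - 1/2) as n → ∞. -/
open Real Filter

theorem stmt_16 (α C : ℝ) (hα : 1 / 2 < α) :
    Tendsto (fun n : ℕ =>
        (n : ℝ) * ∫ r in (0:ℝ)..(2 * Real.log n + C),
          Real.exp (α * (r - (2 * Real.log n + C))) * Real.exp (-r / 2))
      atTop (nhds (Real.exp (-C / 2) / (α - 1 / 2))) := by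
  have hk : (0:ℝ) < α - 1/2 := by linarith
  have hk' : α - 1/2 ≠ 0 := ne_of_gt hk
  -- integral formula
  have hexp : ∀ R : ℝ, ∫ r in (0:ℝ)..R, Real.exp ((α - 1/2) * r)
      = (Real.exp ((α - 1/2) * R) - 1) / (α - 1/2) := by
    intro R
    have hder : ∀ x : ℝ, HasDerivAt (fun y => Real.exp ((α - 1/2) * y) / (α - 1/2))
        (Real.exp ((α - 1/2) * x)) x := by
      intro x
      have h1 : HasDerivAt (fun y : ℝ => (α - 1/2) * y) (α - 1/2) x := by
        simpa using (hasDerivAt_id x).const_mul (α - 1/2)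
      have h2 := (Real.hasDerivAt_exp ((α - 1/2) * x)).comp x h1
      have h3 := h2.div_const (α - 1/2)
      rw [mul_div_cancel_right₀ _ hk'] at h3
      exact h3
    rw [intervalIntegral.integral_eq_sub_of_hasDerivAt (fun x _ => hder x)
      ((Real.continuous_exp.comp (continuous_const.mul continuous_id)).intervalIntegrable 0 R)]
    simp [div_sub_div_same]
    ring
  have hint : ∀ R : ℝ, (∫ r in (0:ℝ)..R, Real.exp (α * (r - R)) * Real.exp (-r/2))
      = (Real.exp (-R/2) - Real.exp (-(α*R))) / (α - 1/2) := by
    intro R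
    have heq : ∀ r : ℝ, Real.exp (α * (r - R)) * Real.exp (-r/2)
        = Real.exp (-(α*R)) * Real.exp ((α - 1/2) * r) := by
      intro r
      rw [← Real.exp_add, ← Real.exp_add]; ring_nf
    simp_rw [heq]
    rw [intervalIntegral.integral_const_mul, hexp]
    have key : Real.exp (-(α*R)) * (Real.exp ((α - 1/2) * R) - 1)
        = Real.exp (-R/2) - Real.exp (-(α*R)) := by
      rw [mul_sub, mul_one, ← Real.exp_add]
      ring_nf
    rw [← key, mul_div_assoc]
  -- eventual equality
  have hev : ∀ᶠ n : ℕ in atTop, (n : ℝ) * ∫ r in (0:ℝ)..(2 * Real.log n + C),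
        Real.exp (α * (r - (2 * Real.log n + C))) * Real.exp (-r / 2)
      = (Real.exp (-C/2) - Real.exp ((1 - 2*α) * Real.log n) * Real.exp (-(α*C))) / (α - 1/2) := by
    filter_upwards [eventually_ge_atTop 1] with n hn
    have hn0 : (0:ℝ) < n := by exact_mod_cast hn
    have hne : (n:ℝ) = Real.exp (Real.log n) := (Real.exp_log hn0).symm
    rw [hint, ← mul_div_assoc]
    congr 1
    rw [mul_sub, hne, ← Real.exp_add, ← Real.exp_add, ← Real.exp_add]
    congr 2 <;> simp [Real.log_exp] <;> ring
  rw [tendsto_congr' hev]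
  have hlog : Tendsto (fun n : ℕ => Real.log n) atTop atTop :=
    Real.tendsto_log_atTop.comp tendsto_natCast_atTop_atTop
  have h0 : Tendsto (fun n : ℕ => Real.exp ((1 - 2*α) * Real.log n)) atTop (nhds 0) :=
    Real.tendsto_exp_atBot.comp (hlog.const_mul_atTop_of_neg (by linarith))
  have : Tendsto (fun n : ℕ =>
      (Real.exp (-C/2) - Real.exp ((1 - 2*α) * Real.log n) * Real.exp (-(α*C))) / (α - 1/2))
      atTop (nhds ((Real.exp (-C/2) - 0 * Real.exp (-(α*C))) / (α - 1/2))) :=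
    (tendsto_const_nhds.sub (h0.mul tendsto_const_nhds)).div_const _
  simpa using this
end
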